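/- arXiv:2407.05997 — 5 statements merged into one kernel-verified Lean document; each statement's English description precedes it below -/
import Mathlib

section
/- Let t ∈ [0,∞)^m and let M be a nonempty compact subset of [0,∞)^m. Then there exists a φ-projection of t on M, that is, there exists s* ∈ M with D_φ(s*∣t) = inf_{s∈M} D_φ(s∣t). -/
open Filter Topology

/-- The extended-real-valued integrand `f(v,w)` of a `φ`-divergence:
`f(v,w) = w·φ(v/w)` if `w > 0`, `f(v,0) = v·L` if `v > 0`, and `f(0,0) = 0`,
where `L = lim_{x→∞} φ(x)/x ∈ ℝ ∪ {∞}`. -/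
noncomputable def phiF (φ : ℝ → ℝ) (L : EReal) (v w : ℝ) : EReal :=
  if 0 < w then ((w * φ (v / w) : ℝ) : EReal)
  else if 0 < v then (v : EReal) * L
  else 0

/-- The `φ`-divergence `D_φ(s∣t) = Σ_{i=1}^m f(s_i, t_i)` of `s` relative to `t`. -/
noncomputable def Dphi (φ : ℝ → ℝ) (L : EReal) {m : ℕ} (s t : Fin m → ℝ) : EReal :=
  ∑ i, phiF φ L (s i) (t i)

/-- `p` is a `φ`-projection of `t` on `M`: `p ∈ M` and `D_φ(p∣t) = inf_{s ∈ M} D_φ(s∣t)`. -/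
def IsPhiProj (φ : ℝ → ℝ) (L : EReal) {m : ℕ} (M : Set (Fin m → ℝ))
    (t p : Fin m → ℝ) : Prop :=
  p ∈ M ∧ Dphi φ L p t = ⨅ s ∈ M, Dphi φ L s t

/-! Convexity makes `φ` continuous on `[0,∞)` and bounds `φ x / x` below for `x ≥ 1`, so
`L > -∞`. Each summand of `D_φ(·∣t)` is then a lower semicontinuous function of `s` that never
takes the value `⊥`, which is exactly what is needed for the `EReal`-valued sum to stay lower
semicontinuous; a lower semicontinuous function attains its minimum on a nonempty compact set. -/

open Set

theorem EReal.lowerSemicontinuousOn_sum {α ι : Type*} [TopologicalSpace α] {s : Set α}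
    {f : ι → α → EReal} {a : Finset ι} (hf : ∀ i ∈ a, LowerSemicontinuousOn (f i) s)
    (hbot : ∀ i ∈ a, ∀ x ∈ s, f i x ≠ ⊥) :
    LowerSemicontinuousOn (fun x => ∑ i ∈ a, f i x) s := by
  classical
  induction a using Finset.induction_on with
  | empty => simpa using lowerSemicontinuousOn_const
  | insert j a hj ih =>
    simp only [Finset.mem_insert, forall_eq_or_imp] at hf hbot
    have hsum_ne_bot : ∀ x ∈ s, ∑ i ∈ a, f i x ≠ ⊥ := fun x hx =>
      Finset.sum_induction _ (· ≠ ⊥) (fun _ _ ha hb => EReal.add_ne_bot_iff.2 ⟨ha, hb⟩)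
        EReal.zero_ne_bot fun i hi => hbot.2 i hi x hx
    simp only [Finset.sum_insert hj]
    exact hf.1.add' (ih hf.2 hbot.2) fun x hx =>
      EReal.continuousAt_add (Or.inr (hsum_ne_bot x hx)) (Or.inl (hbot.1 x hx))

theorem EReal.lowerSemicontinuousOn_coe_mul_Ici {L : EReal} (hL : L ≠ ⊥) :
    LowerSemicontinuousOn (fun v : ℝ => (v : EReal) * L) (Ici 0) := by
  induction L using EReal.rec with
  | bot => exact absurd rfl hL
  | coe r =>
    simp_rw [← EReal.coe_mul]
    exact (continuous_coe_real_ereal.comp (continuous_mul_const r)).lowerSemicontinuous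
      |>.lowerSemicontinuousOn _
  | top =>
    intro v hv y hy
    rcases (mem_Ici.1 hv).eq_or_lt with rfl | hv
    · filter_upwards [self_mem_nhdsWithin] with u hu
      exact (by simpa using hy : y < 0).trans_le (EReal.mul_nonneg (by exact_mod_cast hu) le_top)
    · filter_upwards [eventually_nhdsWithin_of_eventually_nhds (eventually_gt_nhds hv)] with u hu
      rw [EReal.coe_mul_top_of_pos hu]
      exact hy.trans_le le_top

theorem ConvexOn.sub_abs_le_div {φ : ℝ → ℝ} (hφ : ConvexOn ℝ (Ici 0) φ) {x : ℝ} (hx : 1 ≤ x) :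
    φ 1 - |φ 0| ≤ φ x / x := by
  have hx0 : 0 < x := one_pos.trans_le hx
  have hinv : x⁻¹ ≤ 1 := inv_le_one_of_one_le₀ hx
  have hcomb := hφ.2 self_mem_Ici (mem_Ici.2 hx0.le) (sub_nonneg.2 hinv)
    (inv_nonneg.2 hx0.le) (sub_add_cancel 1 x⁻¹)
  simp only [smul_eq_mul, mul_zero, zero_add, inv_mul_cancel₀ hx0.ne'] at hcomb
  have : (1 - x⁻¹) * φ 0 ≤ |φ 0| := by
    nlinarith [le_abs_self (φ 0), abs_nonneg (φ 0), inv_pos.2 hx0]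
  rw [div_eq_inv_mul]
  linarith

theorem ConvexOn.ne_bot_of_tendsto_div {φ : ℝ → ℝ} {L : EReal} (hφ : ConvexOn ℝ (Ici 0) φ)
    (hL : Tendsto (fun x : ℝ => ((φ x / x : ℝ) : EReal)) atTop (𝓝 L)) : L ≠ ⊥ :=
  ne_bot_of_le_ne_bot (EReal.coe_ne_bot (φ 1 - |φ 0|)) <| ge_of_tendsto hL <|
    (eventually_ge_atTop 1).mono fun _ hx => EReal.coe_le_coe_iff.2 (hφ.sub_abs_le_div hx)

section phiF

variable {φ : ℝ → ℝ} {L : EReal}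

theorem phiF_of_pos {w : ℝ} (hw : 0 < w) (v : ℝ) : phiF φ L v w = ((w * φ (v / w) : ℝ) : EReal) :=
  if_pos hw

theorem phiF_zero_right {v : ℝ} (hv : 0 ≤ v) : phiF φ L v 0 = (v : EReal) * L := by
  rcases hv.eq_or_lt with rfl | hv
  · simp [phiF]
  · simp [phiF, hv]

theorem phiF_ne_bot (hL : L ≠ ⊥) (v w : ℝ) : phiF φ L v w ≠ ⊥ := by
  unfold phiF
  split_ifs with hw hv
  · exact EReal.coe_ne_bot _
  · induction L using EReal.rec with
    | bot => exact absurd rfl hL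
    | coe r => exact_mod_cast EReal.coe_ne_bot (v * r)
    | top => simp [EReal.coe_mul_top_of_pos hv]
  · exact EReal.zero_ne_bot

theorem lowerSemicontinuousOn_phiF (hφ : ContinuousOn φ (Ici 0)) (hL : L ≠ ⊥) {w : ℝ}
    (hw : 0 ≤ w) : LowerSemicontinuousOn (fun v => phiF φ L v w) (Ici 0) := by
  rcases hw.eq_or_lt with rfl | hw
  · intro v hv
    exact LowerSemicontinuousWithinAt.congr_of_eventuallyEq
      (EReal.lowerSemicontinuousOn_coe_mul_Ici hL v hv) hv
      (eventuallyEq_nhdsWithin_of_eqOn fun u hu => (phiF_zero_right hu).symm)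
  · simp_rw [phiF_of_pos hw]
    refine ContinuousOn.lowerSemicontinuousOn ?_
    refine continuous_coe_real_ereal.comp_continuousOn (continuousOn_const.mul ?_)
    exact hφ.comp (continuousOn_id.div_const w) fun v hv => div_nonneg hv hw.le

end phiF

theorem lowerSemicontinuousOn_Dphi {m : ℕ} {φ : ℝ → ℝ} {L : EReal}
    (hφ : ContinuousOn φ (Ici 0)) (hL : L ≠ ⊥) {t : Fin m → ℝ} (ht : ∀ i, 0 ≤ t i)
    {M : Set (Fin m → ℝ)} (hMnn : ∀ s ∈ M, ∀ i, 0 ≤ s i) :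
    LowerSemicontinuousOn (fun s => Dphi φ L s t) M :=
  EReal.lowerSemicontinuousOn_sum
    (fun i _ => (lowerSemicontinuousOn_phiF hφ hL (ht i)).comp (continuous_apply i).continuousOn
      fun s hs => hMnn s hs i)
    fun _ _ _ _ => phiF_ne_bot hL _ _

theorem statement3_general (m : ℕ) (φ : ℝ → ℝ) (L : EReal)
    (hφconv : ConvexOn ℝ (Set.Ici 0) φ)
    (hφ0 : ContinuousWithinAt φ (Set.Ici 0) 0)
    (hL : Tendsto (fun x : ℝ => ((φ x / x : ℝ) : EReal)) atTop (𝓝 L))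
    (t : Fin m → ℝ) (ht : ∀ i, 0 ≤ t i)
    (M : Set (Fin m → ℝ)) (hMne : M.Nonempty) (hMcpt : IsCompact M)
    (hMnn : ∀ s ∈ M, ∀ i, 0 ≤ s i) :
    ∃ p, IsPhiProj φ L M t p := by
  have hlsc := lowerSemicontinuousOn_Dphi (hφconv.continuousOn_Ici hφ0)
    (hφconv.ne_bot_of_tendsto_div hL) ht hMnn
  obtain ⟨p, hpM, hmin⟩ := hlsc.exists_isMinOn hMne hMcpt
  exact ⟨p, hpM, le_antisymm (le_iInf₂ fun s hs => hmin hs) (iInf₂_le p hpM)⟩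

/-- a `φ`-projection of `t ∈ [0,∞)^m` on a nonempty compact
`M ⊆ [0,∞)^m` exists. -/
theorem statement3 (m : ℕ) (hm : 1 ≤ m) (φ : ℝ → ℝ) (L : EReal)
    (hφconv : ConvexOn ℝ (Set.Ici 0) φ)
    (hφ0 : ContinuousWithinAt φ (Set.Ici 0) 0)
    (hL : Tendsto (fun x : ℝ => ((φ x / x : ℝ) : EReal)) atTop (𝓝 L))
    (t : Fin m → ℝ) (ht : ∀ i, 0 ≤ t i)
    (M : Set (Fin m → ℝ)) (hMne : M.Nonempty) (hMcpt : IsCompact M)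
    (hMnn : ∀ s ∈ M, ∀ i, 0 ≤ s i) :
    ∃ p, IsPhiProj φ L M t p :=
  statement3_general m φ L hφconv hφ0 hL t ht M hMne hMcpt hMnn
end

section
/- Assume φ is strictly convex and lim_{x→∞} φ(x)/x = ∞. Let t ∈ [0,1]^m and let M be a nonempty closed convex subset of [0,1]^m such that M ∩ {s ∈ [0,1]^m : supp(s) ⊆ supp(t)} ≠ ∅. Then the φ-projection of t on M exists and is unique, and it coincides with the unique φ-projection of t on M ∩ {s ∈ [0,1]^m : supp(s) ⊆ supp(t)}. -/
/-!
On the set `S` of points of the unit cube supported in `supp t`, every term of `D_φ(s∣t)` is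
finite and `D_φ(·∣t)` is the real function `s ↦ Σ tᵢ φ(sᵢ/tᵢ)`, which is continuous and, by
strict convexity of the perspective `u ↦ w φ(u/w)` for `w > 0`, strictly convex. Hence it has a
unique minimiser `p` on the nonempty compact convex set `M ∩ S`. Off `S`, some `sᵢ > 0 = tᵢ`
contributes `sᵢ · ∞`, so `D_φ(s∣t) = ∞` there, and `p` is also the unique `φ`-projection on `M`.
-/

open Filter Topology

open Set

section Perspective

variable {φ : ℝ → ℝ} {w : ℝ}

lemma ConvexOn.perspective (hφ : ConvexOn ℝ (Ici 0) φ) (hw : 0 ≤ w) :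
    ConvexOn ℝ (Ici 0) (fun u => w * φ (u / w)) := by
  refine ⟨convex_Ici 0, fun u hu v hv a b ha hb hab => ?_⟩
  have h := hφ.2 (div_nonneg hu hw) (div_nonneg hv hw) ha hb hab
  simp only [smul_eq_mul] at h ⊢
  calc w * φ ((a * u + b * v) / w) = w * φ (a * (u / w) + b * (v / w)) := by ring_nf
    _ ≤ w * (a * φ (u / w) + b * φ (v / w)) := mul_le_mul_of_nonneg_left h hw
    _ = a * (w * φ (u / w)) + b * (w * φ (v / w)) := by ring

lemma StrictConvexOn.perspective (hφ : StrictConvexOn ℝ (Ici 0) φ) (hw : 0 < w) :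
    StrictConvexOn ℝ (Ici 0) (fun u => w * φ (u / w)) := by
  refine ⟨convex_Ici 0, fun u hu v hv huv a b ha hb hab => ?_⟩
  have h := hφ.2 (div_nonneg hu hw.le) (div_nonneg hv hw.le)
    ((div_left_inj' hw.ne').not.mpr huv) ha hb hab
  simp only [smul_eq_mul] at h ⊢
  calc w * φ ((a * u + b * v) / w) = w * φ (a * (u / w) + b * (v / w)) := by ring_nf
    _ < w * (a * φ (u / w) + b * φ (v / w)) := mul_lt_mul_of_pos_left h hw
    _ = a * (w * φ (u / w)) + b * (w * φ (v / w)) := by ring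

end Perspective

lemma EReal.coe_finset_sum {ι : Type*} (s : Finset ι) (f : ι → ℝ) :
    ((∑ i ∈ s, f i : ℝ) : EReal) = ∑ i ∈ s, (f i : EReal) :=
  map_sum (⟨⟨Real.toEReal, EReal.coe_zero⟩, EReal.coe_add⟩ : ℝ →+ EReal) f s

lemma EReal.finset_sum_ne_bot {ι : Type*} {s : Finset ι} {f : ι → EReal}
    (hf : ∀ i ∈ s, f i ≠ ⊥) : ∑ i ∈ s, f i ≠ ⊥ :=
  (WithBot.sum_lt_bot (M := WithTop ℝ) hf).ne'

def supportedIn {m : ℕ} (t : Fin m → ℝ) : Set (Fin m → ℝ) :=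
  {s | ∀ i, 0 < s i → 0 < t i}

-- A term with `tᵢ = 0` is `0 * φ (sᵢ / 0) = 0`, as `f(0,0) = 0` requires.
noncomputable def realDphi (φ : ℝ → ℝ) {m : ℕ} (s t : Fin m → ℝ) : ℝ :=
  ∑ i, t i * φ (s i / t i)

section Divergence

variable {φ : ℝ → ℝ} {m : ℕ} {s t : Fin m → ℝ}

lemma convex_supportedIn : Convex ℝ (supportedIn t) := by
  intro x hx y hy a b ha hb _ i hi
  by_contra hti
  have hx0 : x i ≤ 0 := not_lt.mp fun h => hti (hx i h)
  have hy0 : y i ≤ 0 := not_lt.mp fun h => hti (hy i h)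
  simp only [Pi.add_apply, Pi.smul_apply, smul_eq_mul] at hi
  nlinarith [mul_nonpos_of_nonneg_of_nonpos ha hx0, mul_nonpos_of_nonneg_of_nonpos hb hy0]

lemma isClosed_supportedIn : IsClosed (supportedIn t) := by
  simp only [supportedIn, ofPred_forall]
  refine isClosed_iInter fun i => ?_
  by_cases hti : 0 < t i
  · simp [hti]
  · simpa [hti] using isClosed_le (continuous_apply i) continuous_const

lemma phiF_top_ne_bot (v w : ℝ) : phiF φ ⊤ v w ≠ ⊥ := by
  unfold phiF
  split_ifs with _ hv
  · exact EReal.coe_ne_bot _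
  · simp [EReal.coe_mul_top_of_pos hv]
  · simp

lemma Dphi_top_eq_top_of_pos_of_nonpos {i : Fin m} (hsi : 0 < s i) (hti : t i ≤ 0) :
    Dphi φ ⊤ s t = ⊤ := by
  classical
  have hi : phiF φ ⊤ (s i) (t i) = ⊤ := by
    simp only [phiF, if_neg (not_lt.mpr hti), if_pos hsi]
    exact EReal.coe_mul_top_of_pos hsi
  rw [Dphi, ← Finset.add_sum_erase _ _ (Finset.mem_univ i), hi,
    EReal.top_add_of_ne_bot (EReal.finset_sum_ne_bot fun _ _ => phiF_top_ne_bot _ _)]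

lemma Dphi_eq_realDphi {L : EReal} (ht : 0 ≤ t) (hs : s ∈ supportedIn t) :
    Dphi φ L s t = realDphi φ s t := by
  rw [Dphi, realDphi, EReal.coe_finset_sum]
  refine Finset.sum_congr rfl fun i _ => ?_
  by_cases hti : 0 < t i
  · simp only [phiF, if_pos hti]
  · have hsi : ¬ 0 < s i := fun h => hti (hs i h)
    have ht0 : t i = 0 := le_antisymm (not_lt.mp hti) (ht i)
    simp [phiF, hsi, ht0]

lemma continuousOn_realDphi (hφ : ContinuousOn φ (Ici 0)) (ht : 0 ≤ t) :
    ContinuousOn (realDphi φ · t) (Ici 0) :=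
  continuousOn_finsetSum _ fun i _ => continuousOn_const.mul <|
    hφ.comp (continuous_apply i |>.div_const _).continuousOn
      fun _ hs => div_nonneg (hs i) (ht i)

lemma strictConvexOn_realDphi (hφ : StrictConvexOn ℝ (Ici 0) φ) (ht : 0 ≤ t) :
    StrictConvexOn ℝ (Ici 0 ∩ supportedIn t) (realDphi φ · t) := by
  refine ⟨(convex_Ici 0).inter convex_supportedIn, fun x hx y hy hxy a b ha hb hab => ?_⟩
  obtain ⟨i₀, hi₀⟩ := Function.ne_iff.mp hxy
  have hti₀ : 0 < t i₀ := by
    by_contra h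
    have hx0 : x i₀ = 0 := le_antisymm (not_lt.mp fun hp => h (hx.2 i₀ hp)) (hx.1 i₀)
    have hy0 : y i₀ = 0 := le_antisymm (not_lt.mp fun hp => h (hy.2 i₀ hp)) (hy.1 i₀)
    exact hi₀ (hx0.trans hy0.symm)
  simp only [realDphi, smul_eq_mul, Finset.mul_sum, ← Finset.sum_add_distrib, Pi.add_apply,
    Pi.smul_apply]
  refine Finset.sum_lt_sum (fun i _ => ?_) ⟨i₀, Finset.mem_univ _, ?_⟩
  · simpa only [smul_eq_mul] using
      (hφ.convexOn.perspective (ht i)).2 (hx.1 i) (hy.1 i) ha.le hb.le hab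
  · simpa only [smul_eq_mul] using (hφ.perspective hti₀).2 (hx.1 i₀) (hy.1 i₀) hi₀ ha hb hab

lemma isPhiProj_iff_of_isMinOn {L : EReal} {M N : Set (Fin m → ℝ)} {g : (Fin m → ℝ) → ℝ}
    {p : Fin m → ℝ} (hNM : N ⊆ M) (hg : StrictConvexOn ℝ N g) (hp : p ∈ N)
    (hmin : IsMinOn g N p) (hD : ∀ s ∈ N, Dphi φ L s t = g s)
    (hD_top : ∀ s ∈ M \ N, Dphi φ L s t = ⊤) (s : Fin m → ℝ) :
    IsPhiProj φ L M t s ↔ s = p := by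
  have hinf : ⨅ x ∈ M, Dphi φ L x t = g p := by
    refine le_antisymm (iInf₂_le_of_le p (hNM hp) (hD p hp).le) (le_iInf₂ fun x hx => ?_)
    by_cases hxN : x ∈ N
    · rw [hD x hxN]
      exact_mod_cast hmin hxN
    · rw [hD_top x ⟨hx, hxN⟩]
      exact le_top
  constructor
  · rintro ⟨hsM, hs⟩
    rw [hinf] at hs
    have hsN : s ∈ N := by
      by_contra hsN
      rw [hD_top s ⟨hsM, hsN⟩] at hs
      exact EReal.coe_ne_top _ hs.symm
    have hgs : g s = g p := by
      rw [hD s hsN] at hs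
      exact_mod_cast hs
    exact hg.eq_of_isMinOn (fun x hx => hgs ▸ hmin hx) hmin hsN hp
  · rintro rfl
    exact ⟨hNM hp, by rw [hinf, hD s hp]⟩

end Divergence

theorem statement5_general (m : ℕ) (φ : ℝ → ℝ)
    (hφ0 : ContinuousWithinAt φ (Set.Ici 0) 0)
    (hφsc : StrictConvexOn ℝ (Set.Ici (0 : ℝ)) φ)
    (t : Fin m → ℝ) (ht : ∀ i, t i ∈ Set.Icc (0 : ℝ) 1)
    (M : Set (Fin m → ℝ)) (hMcl : IsClosed M)
    (hMconv : Convex ℝ M)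
    (hMsub : ∀ s ∈ M, ∀ i, s i ∈ Set.Icc (0 : ℝ) 1)
    (hint : (M ∩ {s : Fin m → ℝ | (∀ i, s i ∈ Set.Icc (0 : ℝ) 1) ∧
        ∀ i, 0 < s i → 0 < t i}).Nonempty) :
    ∃ p : Fin m → ℝ,
      (∀ s, IsPhiProj φ ⊤ M t s ↔ s = p) ∧
      (∀ s, IsPhiProj φ ⊤
          (M ∩ {s : Fin m → ℝ | (∀ i, s i ∈ Set.Icc (0 : ℝ) 1) ∧
            ∀ i, 0 < s i → 0 < t i}) t s ↔ s = p) := by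
  have hS : {s : Fin m → ℝ | (∀ i, s i ∈ Set.Icc (0 : ℝ) 1) ∧ ∀ i, 0 < s i → 0 < t i} =
      Icc 0 1 ∩ supportedIn t := by
    ext s
    simp [supportedIn, Pi.le_def, forall_and]
  rw [hS] at hint ⊢
  set N := M ∩ (Icc 0 1 ∩ supportedIn t)
  have ht0 : 0 ≤ t := fun i => (ht i).1
  have hN : N ⊆ Ici 0 ∩ supportedIn t := fun s hs => ⟨hs.2.1.1, hs.2.2⟩
  have hNcpt : IsCompact N :=
    (isCompact_Icc.inter_right isClosed_supportedIn).of_isClosed_subset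
      (hMcl.inter (isClosed_Icc.inter isClosed_supportedIn)) inter_subset_right
  obtain ⟨p, hpN, hpmin⟩ := hNcpt.exists_isMinOn hint <|
    (continuousOn_realDphi (hφsc.convexOn.continuousOn_Ici hφ0) ht0).mono
      (hN.trans inter_subset_left)
  have hconv : StrictConvexOn ℝ N (realDphi φ · t) :=
    (strictConvexOn_realDphi hφsc ht0).subset hN
      (hMconv.inter ((convex_Icc 0 1).inter convex_supportedIn))
  have hD : ∀ s ∈ N, Dphi φ ⊤ s t = realDphi φ s t := fun s hs => Dphi_eq_realDphi ht0 hs.2.2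
  refine ⟨p, isPhiProj_iff_of_isMinOn inter_subset_left hconv hpN hpmin hD ?_,
    isPhiProj_iff_of_isMinOn subset_rfl hconv hpN hpmin hD (by simp)⟩
  rintro s ⟨hsM, hsN⟩
  obtain ⟨i, hsi, hti⟩ : ∃ i, 0 < s i ∧ ¬ 0 < t i := by
    by_contra! h
    exact hsN ⟨hsM, (hS ▸ ⟨hMsub s hsM, h⟩ : s ∈ Icc 0 1 ∩ supportedIn t)⟩
  exact Dphi_top_eq_top_of_pos_of_nonpos hsi (not_lt.mp hti)

/-- if `φ` is strictly convex and `lim_{x→∞} φ(x)/x = ∞`, `t ∈ [0,1]^m`,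
and `M ⊆ [0,1]^m` is nonempty closed convex with
`M ∩ {s ∈ [0,1]^m : supp(s) ⊆ supp(t)} ≠ ∅`, then the `φ`-projection of `t` on `M`
exists, is unique, and coincides with the unique `φ`-projection of `t` on
`M ∩ {s ∈ [0,1]^m : supp(s) ⊆ supp(t)}`. -/
theorem statement5 (m : ℕ) (hm : 1 ≤ m) (φ : ℝ → ℝ)
    (hφconv : ConvexOn ℝ (Set.Ici 0) φ)
    (hφ0 : ContinuousWithinAt φ (Set.Ici 0) 0)
    (hL : Tendsto (fun x : ℝ => ((φ x / x : ℝ) : EReal)) atTop (𝓝 (⊤ : EReal)))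
    (hφsc : StrictConvexOn ℝ (Set.Ici (0 : ℝ)) φ)
    (t : Fin m → ℝ) (ht : ∀ i, t i ∈ Set.Icc (0 : ℝ) 1)
    (M : Set (Fin m → ℝ)) (hMne : M.Nonempty) (hMcl : IsClosed M)
    (hMconv : Convex ℝ M)
    (hMsub : ∀ s ∈ M, ∀ i, s i ∈ Set.Icc (0 : ℝ) 1)
    (hint : (M ∩ {s : Fin m → ℝ | (∀ i, s i ∈ Set.Icc (0 : ℝ) 1) ∧
        ∀ i, 0 < s i → 0 < t i}).Nonempty) :
    ∃ p : Fin m → ℝ,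
      (∀ s, IsPhiProj φ ⊤ M t s ↔ s = p) ∧
      (∀ s, IsPhiProj φ ⊤
          (M ∩ {s : Fin m → ℝ | (∀ i, s i ∈ Set.Icc (0 : ℝ) 1) ∧
            ∀ i, 0 < s i → 0 < t i}) t s ↔ s = p) :=
  statement5_general m φ hφ0 hφsc t ht M hMcl hMconv hMsub hint
end

section
/- Let t0 ∈ (0,1)^m and assume there exists an open neighborhood N(t0) ⊆ (0,1)^m of t0 such that for every t ∈ N(t0) the φ-projection of t on M = S(cl(Θ)) exists and is unique. Then the map S* : N(t0) → M, assigning to each t ∈ N(t0) its unique φ-projection on M, is continuous at t0. -/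
open Filter Topology

/-!
For `t` with positive coordinates, `D_φ(s∣t) = Σ tᵢ φ(sᵢ/tᵢ)` is real-valued and, being a sum of
perspectives of a function continuous on `[0, ∞)` (a convex function continuous at `0`), jointly
continuous in `(s, t)` on `[0, ∞)^m × (0, ∞)^m`. Since `M` is compact, this is Berge's maximum
theorem: along `t → t₀` within `N`, every cluster point of `S*(t)` lies in `M` and, by passing to
the limit in `D_φ(S*(t)∣t) ≤ D_φ(s∣t)`, minimizes `D_φ(·∣t₀)` on `M`; by uniqueness it is `S*(t₀)`.
-/

open Set

theorem continuousWithinAt_of_isMinOn_of_unique {X Y : Type*} [TopologicalSpace X]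
    [TopologicalSpace Y] {K : Set Y} {U : Set X} {G : Y → X → ℝ} {g : X → Y} {x₀ : X}
    (hK : IsCompact K) (hG : ContinuousOn (fun p : Y × X => G p.1 p.2) (K ×ˢ U))
    (hgK : ∀ x ∈ U, g x ∈ K) (hmin : ∀ x ∈ U, IsMinOn (G · x) K (g x)) (hx₀ : x₀ ∈ U)
    (huniq : ∀ y ∈ K, IsMinOn (G · x₀) K y → y = g x₀) :
    ContinuousWithinAt g U x₀ := by
  refine hK.tendsto_nhds_of_unique_mapClusterPt
    (eventually_nhdsWithin_of_forall hgK) fun y hyK hy => huniq y hyK fun s hsK => ?_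
  obtain ⟨𝒰, h𝒰U, hg𝒰⟩ := mapClusterPt_iff_ultrafilter.1 hy
  have hU : ∀ᶠ x in (𝒰 : Filter X), x ∈ U := h𝒰U self_mem_nhdsWithin
  have hx : Tendsto id (𝒰 : Filter X) (𝓝 x₀) := h𝒰U.trans nhdsWithin_le_nhds
  have tendsto_objective : ∀ {h : X → Y} {z : Y}, z ∈ K → (∀ x ∈ U, h x ∈ K) →
      Tendsto h 𝒰 (𝓝 z) → Tendsto (fun x => G (h x) x) 𝒰 (𝓝 (G z x₀)) :=
    fun {h z} hz hhK hh => (hG (z, x₀) ⟨hz, hx₀⟩).tendsto.comp <| tendsto_nhdsWithin_iff.2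
      ⟨hh.prodMk_nhds hx, hU.mono fun x (hxU : x ∈ U) => ⟨hhK x hxU, hxU⟩⟩
  exact le_of_tendsto_of_tendsto (tendsto_objective hyK hgK hg𝒰)
    (tendsto_objective hsK (fun _ _ => hsK) tendsto_const_nhds)
    (hU.mono fun x hxU => hmin x hxU hsK)

noncomputable def phiDivergence {ι : Type*} [Fintype ι] (φ : ℝ → ℝ) (s t : ι → ℝ) : ℝ :=
  ∑ i, t i * φ (s i / t i)

lemma Dphi_eq_phiDivergence (φ : ℝ → ℝ) (L : EReal) {m : ℕ} (s : Fin m → ℝ) {t : Fin m → ℝ}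
    (ht : ∀ i, 0 < t i) : Dphi φ L s t = phiDivergence φ s t := by
  rw [Dphi, phiDivergence, EReal.coe_finset_sum]
  exact Finset.sum_congr rfl fun i _ => if_pos (ht i)

lemma isPhiProj_iff_isMinOn (φ : ℝ → ℝ) (L : EReal) {m : ℕ} (M : Set (Fin m → ℝ))
    {t : Fin m → ℝ} (ht : ∀ i, 0 < t i) (p : Fin m → ℝ) :
    IsPhiProj φ L M t p ↔ p ∈ M ∧ IsMinOn (phiDivergence φ · t) M p := by
  refine and_congr_right fun hp => ⟨fun h s hs => ?_, fun h => ?_⟩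
  · have hle : Dphi φ L p t ≤ Dphi φ L s t := h ▸ iInf₂_le s hs
    rwa [Dphi_eq_phiDivergence φ L _ ht, Dphi_eq_phiDivergence φ L _ ht,
      EReal.coe_le_coe_iff] at hle
  · refine le_antisymm (le_iInf₂ fun s hs => ?_) (iInf₂_le p hp)
    rw [Dphi_eq_phiDivergence φ L _ ht, Dphi_eq_phiDivergence φ L _ ht]
    exact EReal.coe_le_coe_iff.2 (h hs)

lemma continuousOn_perspective {φ : ℝ → ℝ} (hφ : ContinuousOn φ (Ici 0)) :
    ContinuousOn (fun q : ℝ × ℝ => q.2 * φ (q.1 / q.2)) (Ici 0 ×ˢ Ioi 0) :=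
  continuousOn_snd.mul <| hφ.comp (continuousOn_fst.div continuousOn_snd fun _ hq => hq.2.ne')
    fun _ hq => mem_Ici.2 (div_nonneg hq.1 (le_of_lt hq.2))

lemma continuousOn_phiDivergence {ι : Type*} [Fintype ι] {φ : ℝ → ℝ}
    (hφ : ContinuousOn φ (Ici 0)) :
    ContinuousOn (fun p : (ι → ℝ) × (ι → ℝ) => phiDivergence φ p.1 p.2)
      {p | (∀ i, 0 ≤ p.1 i) ∧ ∀ i, 0 < p.2 i} :=
  continuousOn_finsetSum _ fun i _ => (continuousOn_perspective hφ).comp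
    (f := fun p : (ι → ℝ) × (ι → ℝ) => (p.1 i, p.2 i)) (by fun_prop) fun _ hp => ⟨hp.1 i, hp.2 i⟩

theorem statement9_general (m k : ℕ)
    (φ : ℝ → ℝ) (L : EReal)
    (hφconv : ConvexOn ℝ (Set.Ici 0) φ)
    (hφ0 : ContinuousWithinAt φ (Set.Ici 0) 0)
    (Θ : Set (Fin k → ℝ)) (hΘbd : Bornology.IsBounded Θ)
    (S : (Fin k → ℝ) → (Fin m → ℝ))
    (hScont : ContinuousOn S (closure Θ))
    (hSrange : ∀ θ ∈ closure Θ, ∀ i, S θ i ∈ Set.Icc (0 : ℝ) 1)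
    (t0 : Fin m → ℝ)
    (N : Set (Fin m → ℝ)) (ht0N : t0 ∈ N)
    (hNsub : ∀ t ∈ N, ∀ i, t i ∈ Set.Ioo (0 : ℝ) 1)
    (Sstar : (Fin m → ℝ) → (Fin m → ℝ))
    (hSstar : ∀ t ∈ N, ∀ s, IsPhiProj φ L (S '' closure Θ) t s ↔ s = Sstar t) :
    ContinuousWithinAt Sstar N t0 := by
  have hpos : ∀ t ∈ N, ∀ i, 0 < t i := fun t ht i => (hNsub t ht i).1
  have hproj : ∀ t ∈ N, Sstar t ∈ S '' closure Θ ∧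
      IsMinOn (phiDivergence φ · t) (S '' closure Θ) (Sstar t) := fun t ht =>
    (isPhiProj_iff_isMinOn φ L _ (hpos t ht) _).1 ((hSstar t ht _).2 rfl)
  refine continuousWithinAt_of_isMinOn_of_unique
    (hΘbd.isCompact_closure.image_of_continuousOn hScont)
    ((continuousOn_phiDivergence (hφconv.continuousOn_Ici hφ0)).mono ?_)
    (fun t ht => (hproj t ht).1) (fun t ht => (hproj t ht).2) ht0N fun s hs hmin =>
    (hSstar t0 ht0N s).1 ((isPhiProj_iff_isMinOn φ L _ (hpos t0 ht0N) s).2 ⟨hs, hmin⟩)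
  rintro ⟨_, t⟩ ⟨⟨θ, hθ, rfl⟩, ht⟩
  exact ⟨fun i => (hSrange θ hθ i).1, hpos t ht⟩

/-- under the framework assumptions, if on an open neighborhood
`N ⊆ (0,1)^m` of `t0` the `φ`-projection on `M = S(cl Θ)` exists and is unique,
then the projection map `S*` (assigning to each `t ∈ N` its unique `φ`-projection
on `M`) is continuous at `t0`. -/
theorem statement9 (m k : ℕ) (hm : 1 ≤ m) (hk : 1 ≤ k) (hkm : k ≤ m)
    (φ : ℝ → ℝ) (L : EReal)
    (hφconv : ConvexOn ℝ (Set.Ici 0) φ)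
    (hφ0 : ContinuousWithinAt φ (Set.Ici 0) 0)
    (hL : Tendsto (fun x : ℝ => ((φ x / x : ℝ) : EReal)) atTop (𝓝 L))
    (hφsc : StrictConvexOn ℝ (Set.Ici (0 : ℝ)) φ)
    (hφC2 : ContDiffOn ℝ 2 φ (Set.Ioi (0 : ℝ)))
    (Θ : Set (Fin k → ℝ)) (hΘbd : Bornology.IsBounded Θ)
    (hΘint : (interior Θ).Nonempty)
    (S : (Fin k → ℝ) → (Fin m → ℝ))
    (hScont : ContinuousOn S (closure Θ))
    (hSinj : Set.InjOn S (closure Θ))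
    (hSC2 : ContDiffOn ℝ 2 S (interior Θ))
    (hSrange : ∀ θ ∈ closure Θ, ∀ i, S θ i ∈ Set.Icc (0 : ℝ) 1)
    (hSint : ∀ θ ∈ interior Θ, ∀ i, S θ i ∈ Set.Ioo (0 : ℝ) 1)
    (t0 : Fin m → ℝ) (ht0 : ∀ i, t0 i ∈ Set.Ioo (0 : ℝ) 1)
    (N : Set (Fin m → ℝ)) (hNopen : IsOpen N) (ht0N : t0 ∈ N)
    (hNsub : ∀ t ∈ N, ∀ i, t i ∈ Set.Ioo (0 : ℝ) 1)
    (Sstar : (Fin m → ℝ) → (Fin m → ℝ))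
    (hSstar : ∀ t ∈ N, ∀ s, IsPhiProj φ L (S '' closure Θ) t s ↔ s = Sstar t) :
    ContinuousWithinAt Sstar N t0 :=
  statement9_general m k φ L hφconv hφ0 Θ hΘbd S hScont hSrange t0 N ht0N hNsub Sstar hSstar
end

section
/- Let t0 ∈ (0,1)^m. Assume: (i) there is an open neighborhood N(t0) ⊆ (0,1)^m of t0 such that for every t ∈ N(t0) the φ-projection of t on M = S(cl(Θ)) exists, is unique, and equals S(θ) for a (necessarily unique) θ ∈ int(Θ), so that ϑ* maps N(t0) into int(Θ); and (ii) the k×k Hessian matrix H0 of the function θ ↦ D_φ(S(θ)∣t0) evaluated at ϑ*(t0) is positive definite. Then the map S* = S ∘ ϑ* is continuously differentiable on an open neighborhood of t0, and its m×m Jacobian matrix at t0 is J[S*](t0) = J[S](ϑ*(t0)) · J[ϑ*](t0), where J[ϑ*](t0) = H0⁻¹ · J[S](ϑ*(t0))ᵀ · Δ(t0) and Δ(t0) is the m×m diagonal matrix whose i-th diagonal entry is (S_i(ϑ*(t0))/t_{0,i}²)·φ''(S_i(ϑ*(t0))/t_{0,i}). -/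
open Filter Topology Matrix

/-- For `t ∈ (0,1)^m` and `s ∈ [0,1]^m`, the (real-valued) `φ`-divergence
`D_φ(s∣t) = Σ_{i=1}^m t_i φ(s_i/t_i)`. -/
noncomputable def DphiR (φ : ℝ → ℝ) {m : ℕ} (s t : Fin m → ℝ) : ℝ :=
  ∑ i, t i * φ (s i / t i)

/-- `p` is a `φ`-projection of `t` on `M`: `p ∈ M` minimizes `D_φ(·∣t)` over `M`. -/
def IsPhiProjR (φ : ℝ → ℝ) {m : ℕ} (M : Set (Fin m → ℝ)) (t p : Fin m → ℝ) : Prop :=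
  p ∈ M ∧ ∀ s ∈ M, DphiR φ p t ≤ DphiR φ s t

/-- The Jacobian matrix of `F : ℝ^a → ℝ^b` at `x`. -/
noncomputable def jacMatrix {a b : ℕ} (F : (Fin a → ℝ) → (Fin b → ℝ))
    (x : Fin a → ℝ) : Matrix (Fin b) (Fin a) ℝ :=
  Matrix.of fun i j => fderiv ℝ (fun y => F y i) x (Pi.single j 1)

/-- The Hessian matrix of `h : ℝ^a → ℝ` at `x`. -/
noncomputable def hessMatrix {a : ℕ} (h : (Fin a → ℝ) → ℝ)
    (x : Fin a → ℝ) : Matrix (Fin a) (Fin a) ℝ :=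
  Matrix.of fun i j =>
    fderiv ℝ (fun y => fderiv ℝ h y (Pi.single j 1)) x (Pi.single i 1)

/-!
At every `t ∈ N` the minimiser `ϑ t` is interior, so it solves the stationarity equation
`G(t, θ) = 0`, where `G(t, ·) = J[S]ᵀ φ'(S/t)` is the gradient of `θ ↦ D_φ(S θ ∣ t)`.
The `θ`-derivative of `G` at `(t0, ϑ t0)` is the positive definite Hessian `H0`, so by the
implicit function theorem the zero set of `G` near `(t0, ϑ t0)` is the graph of a `C¹` map.
Compactness of `cl(Θ)` and uniqueness of the projection at `t0` make `ϑ` continuous at `t0`,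
so `ϑ` lies on that graph. Differentiating `G(t, ϑ t) = 0` gives
`H0 · J[ϑ](t0) = -∂ₜG = J[S]ᵀ Δ(t0)`, and the chain rule gives `J[S ∘ ϑ](t0)`.
-/

open Set Function

theorem tendsto_nhds_of_isMinOn_of_unique {X Y α : Type*} [TopologicalSpace X]
    [TopologicalSpace Y] [LinearOrder α] [TopologicalSpace α] [OrderClosedTopology α]
    {F : X → Y → α} {U : Set X} {K : Set Y} {x₀ : X} {g : X → Y}
    (hK : IsCompact K) (hU : U ∈ 𝓝 x₀) (hF : ContinuousOn (uncurry F) (U ×ˢ K))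
    (hg : ∀ᶠ x in 𝓝 x₀, g x ∈ K ∧ IsMinOn (F x) K (g x))
    (huniq : ∀ y ∈ K, IsMinOn (F x₀) K y → y = g x₀) :
    Tendsto g (𝓝 x₀) (𝓝 (g x₀)) := by
  obtain ⟨hgK₀, hmin₀⟩ := hg.self_of_nhds
  have hx₀ : x₀ ∈ U := mem_of_mem_nhds hU
  rw [tendsto_nhds]
  intro V hV hgV
  -- off `V`, the value at `g x₀` stays strictly below, uniformly on the compact `K \ V`
  have hsep : ∀ᶠ x in 𝓝 x₀, ∀ y ∈ K \ V, x ∈ U → y ∈ K → F x (g x₀) < F x y := by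
    refine (hK.diff hV).eventually_forall_of_forall_eventually fun y hy => ?_
    have hlt : F x₀ (g x₀) < F x₀ y := by
      refine (hmin₀ hy.1).lt_of_ne fun heq => hy.2 ?_
      rw [huniq y hy.1 fun z hz => heq ▸ hmin₀ hz]
      exact hgV
    have hleft : ContinuousWithinAt (fun z : X × Y => F z.1 (g x₀)) (U ×ˢ K) (x₀, y) :=
      (hF _ ⟨hx₀, hgK₀⟩).comp (continuous_fst.prodMk continuous_const).continuousWithinAt
        fun z hz => ⟨hz.1, hgK₀⟩
    have := hleft.eventually_lt (hF _ ⟨hx₀, hy.1⟩) hlt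
    rw [eventually_nhdsWithin_iff] at this
    filter_upwards [this] with z hz hzU hzK using hz ⟨hzU, hzK⟩
  filter_upwards [hg, hsep, hU] with x ⟨hgK, hmin⟩ hsep hxU
  by_contra hgV
  exact (hsep (g x) ⟨hgK, hgV⟩ hxU hgK).not_ge (hmin hgK₀)

section Jacobian

variable {a b c : ℕ}

theorem jacMatrix_eq_toMatrix' {F : (Fin a → ℝ) → Fin b → ℝ} {x : Fin a → ℝ}
    (hF : DifferentiableAt ℝ F x) :
    jacMatrix F x = LinearMap.toMatrix' (fderiv ℝ F x : (Fin a → ℝ) →ₗ[ℝ] Fin b → ℝ) := by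
  ext i j
  rw [LinearMap.toMatrix'_apply, jacMatrix, of_apply, (hasFDerivAt_pi'.1 hF.hasFDerivAt i).fderiv]
  rfl

theorem jacMatrix_comp {F : (Fin b → ℝ) → Fin c → ℝ} {G : (Fin a → ℝ) → Fin b → ℝ}
    {x : Fin a → ℝ} (hF : DifferentiableAt ℝ F (G x)) (hG : DifferentiableAt ℝ G x) :
    jacMatrix (F ∘ G) x = jacMatrix F (G x) * jacMatrix G x := by
  rw [jacMatrix_eq_toMatrix' (hF.comp x hG), jacMatrix_eq_toMatrix' hF, jacMatrix_eq_toMatrix' hG,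
    fderiv_comp x hF hG, ContinuousLinearMap.toLinearMap_comp, LinearMap.toMatrix'_comp]

theorem jacMatrix_mulVec (A : Matrix (Fin c) (Fin b) ℝ) {w : (Fin a → ℝ) → Fin b → ℝ}
    {x : Fin a → ℝ} (hw : DifferentiableAt ℝ w x) :
    jacMatrix (fun y => A *ᵥ w y) x = A * jacMatrix w x := by
  have hA : DifferentiableAt ℝ (fun v => A *ᵥ v) (w x) :=
    (Matrix.toLin' A).toContinuousLinearMap.differentiableAt
  have hA' : fderiv ℝ (fun v => A *ᵥ v) (w x) = (Matrix.toLin' A).toContinuousLinearMap :=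
    (Matrix.toLin' A).toContinuousLinearMap.fderiv
  rw [show (fun y => A *ᵥ w y) = (fun v => A *ᵥ v) ∘ w from rfl, jacMatrix_comp hA hw,
    jacMatrix_eq_toMatrix' hA, hA', LinearMap.coe_toContinuousLinearMap, LinearMap.toMatrix'_toLin']

theorem jacMatrix_pi_map {ψ : Fin a → ℝ → ℝ} {x : Fin a → ℝ}
    (hψ : ∀ i, DifferentiableAt ℝ (ψ i) (x i)) :
    jacMatrix (fun y i => ψ i (y i)) x = diagonal fun i => deriv (ψ i) (x i) := by
  ext i j
  have hi : HasFDerivAt (fun y : Fin a → ℝ => ψ i (y i))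
      (deriv (ψ i) (x i) • ContinuousLinearMap.proj i) x :=
    (hψ i).hasDerivAt.comp_hasFDerivAt x (hasFDerivAt_apply (𝕜 := ℝ) (F' := fun _ : Fin a => ℝ) i x)
  rw [jacMatrix, of_apply, hi.fderiv]
  obtain rfl | hij := eq_or_ne i j
  · simp
  · simp [hij]

theorem hessMatrix_eq_transpose_jacMatrix (h : (Fin a → ℝ) → ℝ) (x : Fin a → ℝ) :
    hessMatrix h x = (jacMatrix (fun y i => fderiv ℝ h y (Pi.single i 1)) x)ᵀ :=
  rfl

theorem Filter.EventuallyEq.jacMatrix_eq {F G : (Fin a → ℝ) → Fin b → ℝ} {x : Fin a → ℝ}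
    (h : F =ᶠ[𝓝 x] G) : jacMatrix F x = jacMatrix G x := by
  ext i j
  simp only [jacMatrix, of_apply]
  have hi : (fun y => F y i) =ᶠ[𝓝 x] fun y => G y i := h.mono fun y hy => congrFun hy i
  rw [hi.fderiv_eq]

theorem jacMatrix_comp_prodMk_left {G : (Fin a → ℝ) × (Fin b → ℝ) → Fin c → ℝ}
    {x : Fin a → ℝ} {y : Fin b → ℝ} (hG : DifferentiableAt ℝ G (x, y)) :
    jacMatrix (fun x' => G (x', y)) x =
      LinearMap.toMatrix' (fderiv ℝ G (x, y) ∘L .inl ℝ _ _ : (Fin a → ℝ) →ₗ[ℝ] Fin c → ℝ) := by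
  have h := hG.hasFDerivAt.comp x (hasFDerivAt_prodMk_left (𝕜 := ℝ) x y)
  rw [← h.fderiv]
  exact jacMatrix_eq_toMatrix' h.differentiableAt

theorem jacMatrix_comp_prodMk_right {G : (Fin a → ℝ) × (Fin b → ℝ) → Fin c → ℝ}
    {x : Fin a → ℝ} {y : Fin b → ℝ} (hG : DifferentiableAt ℝ G (x, y)) :
    jacMatrix (fun y' => G (x, y')) y =
      LinearMap.toMatrix' (fderiv ℝ G (x, y) ∘L .inr ℝ _ _ : (Fin b → ℝ) →ₗ[ℝ] Fin c → ℝ) := by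
  have h := hG.hasFDerivAt.comp y (hasFDerivAt_prodMk_right (𝕜 := ℝ) x y)
  rw [← h.fderiv]
  exact jacMatrix_eq_toMatrix' h.differentiableAt

end Jacobian

theorem ContinuousLinearMap.isInvertible_of_isUnit_det_toMatrix' {𝕜 ι : Type*}
    [NontriviallyNormedField 𝕜] [CompleteSpace 𝕜] [Fintype ι] [DecidableEq ι]
    {L : (ι → 𝕜) →L[𝕜] ι → 𝕜} (hL : IsUnit (LinearMap.toMatrix' (L : (ι → 𝕜) →ₗ[𝕜] ι → 𝕜)).det) :
    L.IsInvertible := by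
  rw [LinearMap.det_toMatrix', ← LinearMap.isUnit_iff_isUnit_det,
    ← ContinuousLinearMap.isUnit_iff_isUnit_toLinearMap] at hL
  obtain ⟨u, rfl⟩ := hL
  exact ⟨.ofUnit u, rfl⟩

section ImplicitFunction

variable {𝕜 : Type*} [NontriviallyNormedField 𝕜]
  {E₁ : Type*} [NormedAddCommGroup E₁] [NormedSpace 𝕜 E₁]
  {E₂ : Type*} [NormedAddCommGroup E₂] [NormedSpace 𝕜 E₂]
  {F : Type*} [NormedAddCommGroup F] [NormedSpace 𝕜 F]

theorem fderiv_comp_inl_add_comp_inr_comp_eq_zero {f : E₁ × E₂ → F} {ψ : E₁ → E₂} {x₀ : E₁}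
    (hf : DifferentiableAt 𝕜 f (x₀, ψ x₀)) (hψ : DifferentiableAt 𝕜 ψ x₀)
    (hfψ : ∀ᶠ x in 𝓝 x₀, f (x, ψ x) = f (x₀, ψ x₀)) :
    fderiv 𝕜 f (x₀, ψ x₀) ∘L .inl 𝕜 E₁ E₂ +
      (fderiv 𝕜 f (x₀, ψ x₀) ∘L .inr 𝕜 E₁ E₂) ∘L fderiv 𝕜 ψ x₀ = 0 := by
  have hcomp : HasFDerivAt (fun x => f (x, ψ x))
      (fderiv 𝕜 f (x₀, ψ x₀) ∘L (ContinuousLinearMap.id 𝕜 E₁).prod (fderiv 𝕜 ψ x₀)) x₀ :=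
    hf.hasFDerivAt.comp x₀ ((hasFDerivAt_id x₀).prodMk hψ.hasFDerivAt)
  have hconst : HasFDerivAt (fun x => f (x, ψ x)) (0 : E₁ →L[𝕜] F) x₀ :=
    (hasFDerivAt_const _ x₀).congr_of_eventuallyEq hfψ
  rw [hconst.unique hcomp]
  ext v
  simp only [_root_.add_apply, ContinuousLinearMap.comp_apply,
    ContinuousLinearMap.inl_apply, ContinuousLinearMap.inr_apply, ContinuousLinearMap.prod_apply,
    ContinuousLinearMap.id_apply]
  rw [← map_add, Prod.mk_add_mk, add_zero, zero_add]

end ImplicitFunction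

section ImplicitFunctionContDiff

variable {𝕜 : Type*} [RCLike 𝕜]
  {E₁ : Type*} [NormedAddCommGroup E₁] [NormedSpace 𝕜 E₁] [CompleteSpace E₁]
  {E₂ : Type*} [NormedAddCommGroup E₂] [NormedSpace 𝕜 E₂] [CompleteSpace E₂]
  {F : Type*} [NormedAddCommGroup F] [NormedSpace 𝕜 F] [CompleteSpace F]

theorem ContDiffAt.contDiffAt_of_eventually_apply_eq {n : WithTop ℕ∞} {f : E₁ × E₂ → F}
    {ψ : E₁ → E₂} {x₀ : E₁} (hf : ContDiffAt 𝕜 n f (x₀, ψ x₀)) (hn : n ≠ 0)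
    (hf₂ : (fderiv 𝕜 f (x₀, ψ x₀) ∘L .inr 𝕜 E₁ E₂).IsInvertible) (hψ : ContinuousAt ψ x₀)
    (hfψ : ∀ᶠ x in 𝓝 x₀, f (x, ψ x) = f (x₀, ψ x₀)) :
    ContDiffAt 𝕜 n ψ x₀ := by
  have hgraph : Tendsto (fun x => (x, ψ x)) (𝓝 x₀) (𝓝 (x₀, ψ x₀)) :=
    tendsto_id.prodMk_nhds hψ
  refine (hf.contDiffAt_implicitFunction hn hf₂).congr_of_eventuallyEq ?_
  -- near `(x₀, ψ x₀)` the level set of `f` is the graph of the implicit function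
  filter_upwards [hgraph.eventually (hf.eventually_apply_eq_iff_implicitFunction hn hf₂), hfψ]
    with x hiff hx using (hiff.1 hx).symm

end ImplicitFunctionContDiff

section ImplicitJacobian

variable {a b : ℕ} {G : (Fin a → ℝ) × (Fin b → ℝ) → Fin b → ℝ} {ψ : (Fin a → ℝ) → Fin b → ℝ}
  {x₀ : Fin a → ℝ}

theorem contDiffAt_of_implicit_of_isUnit_det {n : WithTop ℕ∞} (hG : ContDiffAt ℝ n G (x₀, ψ x₀))
    (hn : n ≠ 0) (hdet : IsUnit (jacMatrix (fun y => G (x₀, y)) (ψ x₀)).det)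
    (hψ : ContinuousAt ψ x₀) (hGψ : ∀ᶠ x in 𝓝 x₀, G (x, ψ x) = G (x₀, ψ x₀)) :
    ContDiffAt ℝ n ψ x₀ := by
  rw [jacMatrix_comp_prodMk_right (hG.differentiableAt hn)] at hdet
  exact hG.contDiffAt_of_eventually_apply_eq hn
    (ContinuousLinearMap.isInvertible_of_isUnit_det_toMatrix' hdet) hψ hGψ

theorem jacMatrix_eq_neg_inv_mul_of_implicit (hG : DifferentiableAt ℝ G (x₀, ψ x₀))
    (hψ : DifferentiableAt ℝ ψ x₀) (hdet : IsUnit (jacMatrix (fun y => G (x₀, y)) (ψ x₀)).det)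
    (hGψ : ∀ᶠ x in 𝓝 x₀, G (x, ψ x) = G (x₀, ψ x₀)) :
    jacMatrix ψ x₀ =
      -((jacMatrix (fun y => G (x₀, y)) (ψ x₀))⁻¹ * jacMatrix (fun x => G (x, ψ x₀)) x₀) := by
  have h := congrArg
    (fun L : (Fin a → ℝ) →L[ℝ] Fin b → ℝ => LinearMap.toMatrix' (L : (Fin a → ℝ) →ₗ[ℝ] Fin b → ℝ))
    (fderiv_comp_inl_add_comp_inr_comp_eq_zero hG hψ hGψ)
  simp only [ContinuousLinearMap.toLinearMap_add, map_add, ContinuousLinearMap.toLinearMap_zero,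
    map_zero] at h
  rw [ContinuousLinearMap.toLinearMap_comp _ (fderiv ℝ ψ x₀), LinearMap.toMatrix'_comp] at h
  rw [← jacMatrix_comp_prodMk_left hG, ← jacMatrix_comp_prodMk_right hG,
    ← jacMatrix_eq_toMatrix' hψ] at h
  calc jacMatrix ψ x₀
      = (jacMatrix (fun y => G (x₀, y)) (ψ x₀))⁻¹ *
          (jacMatrix (fun y => G (x₀, y)) (ψ x₀) * jacMatrix ψ x₀) :=
        (nonsing_inv_mul_cancel_left _ _ hdet).symm
    _ = _ := by rw [eq_neg_of_add_eq_zero_right h, Matrix.mul_neg]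

end ImplicitJacobian

theorem ConvexOn.continuousOn_Ici_of_continuousWithinAt {φ : ℝ → ℝ} {a : ℝ}
    (hφ : ConvexOn ℝ (Ici a) φ) (ha : ContinuousWithinAt φ (Ici a) a) : ContinuousOn φ (Ici a) := by
  intro x hx
  rcases (mem_Ici.1 hx).eq_or_lt with rfl | hax
  · exact ha
  · have hIoi := (hφ.subset Ioi_subset_Ici_self (convex_Ioi a)).continuousOn isOpen_Ioi
    exact (hIoi.continuousAt (Ioi_mem_nhds hax)).continuousWithinAt

section PhiDivergence

variable {m k : ℕ} {φ : ℝ → ℝ} {S : (Fin k → ℝ) → Fin m → ℝ}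

theorem continuousOn_DphiR_comp {P : Set (Fin m → ℝ)}
    {K : Set (Fin k → ℝ)} (hφ : ContinuousOn φ (Ici 0)) (hS : ContinuousOn S K)
    (hS₀ : ∀ θ ∈ K, ∀ i, 0 ≤ S θ i) (hP : ∀ t ∈ P, ∀ i, 0 < t i) :
    ContinuousOn (uncurry fun t θ => DphiR φ (S θ) t) (P ×ˢ K) := by
  show ContinuousOn (fun p : (Fin m → ℝ) × (Fin k → ℝ) => ∑ i, p.1 i * φ (S p.2 i / p.1 i)) _
  refine continuousOn_finsetSum _ fun i _ => ?_
  have hSi : ContinuousOn (fun p : (Fin m → ℝ) × (Fin k → ℝ) => S p.2 i) (P ×ˢ K) :=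
    ((continuous_apply i).comp_continuousOn hS).comp continuous_snd.continuousOn
      fun p hp => hp.2
  have hti : Continuous fun p : (Fin m → ℝ) × (Fin k → ℝ) => p.1 i :=
    (continuous_apply i).comp continuous_fst
  refine hti.continuousOn.mul (hφ.comp (hSi.div hti.continuousOn fun p hp => (hP _ hp.1 i).ne')
    fun p hp => div_nonneg (hS₀ _ hp.2 i) (hP _ hp.1 i).le)

theorem isPhiProjR_image_iff {K : Set (Fin k → ℝ)} {t : Fin m → ℝ} {θ : Fin k → ℝ}
    (hθ : θ ∈ K) :
    IsPhiProjR φ (S '' K) t (S θ) ↔ IsMinOn (fun θ => DphiR φ (S θ) t) K θ := by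
  simp [IsPhiProjR, isMinOn_iff, mem_image_of_mem S hθ]

theorem continuousAt_of_isPhiProjR {K : Set (Fin k → ℝ)} {N : Set (Fin m → ℝ)}
    {t₀ : Fin m → ℝ} {ϑ : (Fin m → ℝ) → Fin k → ℝ} (hK : IsCompact K)
    (hφ : ContinuousOn φ (Ici 0)) (hS : ContinuousOn S K) (hSinj : InjOn S K)
    (hS₀ : ∀ θ ∈ K, ∀ i, 0 ≤ S θ i) (hN : N ∈ 𝓝 t₀) (hNpos : ∀ t ∈ N, ∀ i, 0 < t i)
    (hϑ : ∀ t ∈ N, ϑ t ∈ K ∧ ∀ s, IsPhiProjR φ (S '' K) t s ↔ s = S (ϑ t)) :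
    ContinuousAt ϑ t₀ := by
  have hmin : ∀ t ∈ N, ϑ t ∈ K ∧ IsMinOn (fun θ => DphiR φ (S θ) t) K (ϑ t) := fun t ht =>
    ⟨(hϑ t ht).1, (isPhiProjR_image_iff (hϑ t ht).1).1 (((hϑ t ht).2 _).2 rfl)⟩
  obtain ⟨hK₀, hϑ₀⟩ := hϑ t₀ (mem_of_mem_nhds hN)
  exact tendsto_nhds_of_isMinOn_of_unique hK hN (continuousOn_DphiR_comp hφ hS hS₀ hNpos)
    (eventually_of_mem hN hmin) fun θ hθ hθmin =>
      hSinj hθ hK₀ ((hϑ₀ _).1 ((isPhiProjR_image_iff hθ).2 hθmin))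

theorem hasFDerivAt_DphiR {s t : Fin m → ℝ} (hφ : ∀ i, DifferentiableAt ℝ φ (s i / t i))
    (ht : ∀ i, t i ≠ 0) :
    HasFDerivAt (fun s => DphiR φ s t)
      (∑ i, deriv φ (s i / t i) • (ContinuousLinearMap.proj i : (Fin m → ℝ) →L[ℝ] ℝ)) s := by
  unfold DphiR
  refine HasFDerivAt.fun_sum fun i _ => ?_
  have h1 : HasDerivAt (fun x => t i * φ (x / t i)) (deriv φ (s i / t i)) (s i) := by
    refine (((hφ i).hasDerivAt.comp (s i) ((hasDerivAt_id' (s i)).div_const (t i))).const_mul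
      (t i)).congr_deriv ?_
    field_simp [ht i]
  exact h1.comp_hasFDerivAt (f := fun s : Fin m → ℝ => s i) s
    (hasFDerivAt_apply (𝕜 := ℝ) (F' := fun _ : Fin m => ℝ) i s)

noncomputable def gradDphiR (φ : ℝ → ℝ) (S : (Fin k → ℝ) → Fin m → ℝ) (t : Fin m → ℝ)
    (θ : Fin k → ℝ) : Fin k → ℝ :=
  (jacMatrix S θ)ᵀ *ᵥ fun i => deriv φ (S θ i / t i)

theorem fderiv_DphiR_comp_apply_single {t : Fin m → ℝ}
    {θ : Fin k → ℝ} (hφ : ∀ i, DifferentiableAt ℝ φ (S θ i / t i)) (hS : DifferentiableAt ℝ S θ)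
    (ht : ∀ i, t i ≠ 0) (j : Fin k) :
    fderiv ℝ (fun θ => DphiR φ (S θ) t) θ (Pi.single j 1) = gradDphiR φ S t θ j := by
  rw [show (fun θ => DphiR φ (S θ) t) = (fun s => DphiR φ s t) ∘ S from rfl,
    ((hasFDerivAt_DphiR hφ ht).comp θ hS.hasFDerivAt).fderiv, gradDphiR,
    jacMatrix_eq_toMatrix' hS]
  simp [mulVec, dotProduct, LinearMap.toMatrix'_apply, mul_comm]

theorem fderiv_DphiR_comp_eventuallyEq {U : Set (Fin k → ℝ)} {t : Fin m → ℝ} {θ : Fin k → ℝ}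
    (hφ : DifferentiableOn ℝ φ (Ioi 0)) (hU : IsOpen U) (hS : DifferentiableOn ℝ S U)
    (hS₀ : ∀ θ ∈ U, ∀ i, 0 < S θ i) (ht : ∀ i, 0 < t i) (hθ : θ ∈ U) :
    (fun θ j => fderiv ℝ (fun θ => DphiR φ (S θ) t) θ (Pi.single j 1)) =ᶠ[𝓝 θ]
      gradDphiR φ S t :=
  eventually_of_mem (hU.mem_nhds hθ) fun θ hθ => funext <| fderiv_DphiR_comp_apply_single
    (fun i => hφ.differentiableAt (Ioi_mem_nhds (div_pos (hS₀ θ hθ i) (ht i))))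
    (hS.differentiableAt (hU.mem_nhds hθ)) fun i => (ht i).ne'

theorem gradDphiR_eq_zero_of_isMinOn {U K : Set (Fin k → ℝ)} {t : Fin m → ℝ} {θ : Fin k → ℝ}
    (hφ : DifferentiableOn ℝ φ (Ioi 0)) (hU : IsOpen U) (hUK : U ⊆ K)
    (hS : DifferentiableOn ℝ S U) (hS₀ : ∀ θ ∈ U, ∀ i, 0 < S θ i) (ht : ∀ i, 0 < t i)
    (hθ : θ ∈ U) (hmin : IsMinOn (fun θ => DphiR φ (S θ) t) K θ) :
    gradDphiR φ S t θ = 0 := by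
  have hcrit := (hmin.isLocalMin (mem_of_superset (hU.mem_nhds hθ) hUK)).fderiv_eq_zero
  rw [← (fderiv_DphiR_comp_eventuallyEq hφ hU hS hS₀ ht hθ).self_of_nhds]
  funext j
  simp [hcrit]

theorem hessMatrix_DphiR_comp {U : Set (Fin k → ℝ)} {t : Fin m → ℝ} {θ : Fin k → ℝ}
    (hφ : DifferentiableOn ℝ φ (Ioi 0)) (hU : IsOpen U) (hS : DifferentiableOn ℝ S U)
    (hS₀ : ∀ θ ∈ U, ∀ i, 0 < S θ i) (ht : ∀ i, 0 < t i) (hθ : θ ∈ U) :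
    hessMatrix (fun θ => DphiR φ (S θ) t) θ = (jacMatrix (gradDphiR φ S t) θ)ᵀ := by
  rw [hessMatrix_eq_transpose_jacMatrix,
    (fderiv_DphiR_comp_eventuallyEq hφ hU hS hS₀ ht hθ).jacMatrix_eq]

theorem contDiffOn_gradDphiR {P : Set (Fin m → ℝ)} {U : Set (Fin k → ℝ)}
    (hφ : ContDiffOn ℝ 2 φ (Ioi 0)) (hU : IsOpen U) (hS : ContDiffOn ℝ 2 S U)
    (hS₀ : ∀ θ ∈ U, ∀ i, 0 < S θ i) (hP : ∀ t ∈ P, ∀ i, 0 < t i) :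
    ContDiffOn ℝ 1 (fun p : (Fin m → ℝ) × (Fin k → ℝ) => gradDphiR φ S p.1 p.2) (P ×ˢ U) := by
  refine contDiffOn_pi.2 fun j => ?_
  simp only [gradDphiR, mulVec, dotProduct, transpose_apply, jacMatrix, of_apply]
  refine ContDiffOn.sum fun i _ => ?_
  have hSi : ContDiffOn ℝ 2 (fun y => S y i) U := (contDiff_apply ℝ ℝ i).comp_contDiffOn hS
  have hJ : ContDiffOn ℝ 1 (fun θ => fderiv ℝ (fun y => S y i) θ (Pi.single j 1)) U :=
    (hSi.fderiv_of_isOpen hU (by norm_num)).clm_apply contDiffOn_const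
  have hq : ContDiffOn ℝ 1 (fun p : (Fin m → ℝ) × (Fin k → ℝ) => S p.2 i / p.1 i) (P ×ˢ U) :=
    ((hSi.of_le one_le_two).comp contDiff_snd.contDiffOn fun p hp => hp.2).div
      ((contDiff_apply ℝ ℝ i).comp contDiff_fst).contDiffOn fun p hp => (hP _ hp.1 i).ne'
  exact (hJ.comp contDiff_snd.contDiffOn fun p hp => hp.2).mul
    ((hφ.deriv_of_isOpen isOpen_Ioi (by norm_num)).comp hq fun p hp =>
      div_pos (hS₀ _ hp.2 i) (hP _ hp.1 i))

theorem jacMatrix_gradDphiR_fst {t : Fin m → ℝ} {θ : Fin k → ℝ}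
    (hφ : ∀ i, DifferentiableAt ℝ (deriv φ) (S θ i / t i)) (ht : ∀ i, t i ≠ 0) :
    jacMatrix (fun t => gradDphiR φ S t θ) t =
      -((jacMatrix S θ)ᵀ * diagonal fun i => S θ i / t i ^ 2 * deriv (deriv φ) (S θ i / t i)) := by
  have hψ : ∀ i, HasDerivAt (fun x => deriv φ (S θ i / x))
      (-(S θ i / t i ^ 2 * deriv (deriv φ) (S θ i / t i))) (t i) := fun i =>
    ((hφ i).hasDerivAt.comp (t i) ((hasDerivAt_const (t i) (S θ i)).div (hasDerivAt_id' (t i))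
      (ht i))).congr_deriv (by field_simp; ring)
  have hw : DifferentiableAt ℝ (fun t i => deriv φ (S θ i / t i)) t :=
    differentiableAt_pi.2 fun i => (hψ i).differentiableAt.comp (f := fun t : Fin m → ℝ => t i) t
      (differentiableAt_apply i t)
  rw [show (fun t => gradDphiR φ S t θ) =
      fun t => (jacMatrix S θ)ᵀ *ᵥ fun i => deriv φ (S θ i / t i) from rfl, jacMatrix_mulVec _ hw,
    jacMatrix_pi_map (ψ := fun i x => deriv φ (S θ i / x)) fun i => (hψ i).differentiableAt]
  simp only [(hψ _).deriv, ← diagonal_neg, Matrix.mul_neg]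

theorem contDiffAt_and_jacMatrix_eq_of_gradDphiR_eq_zero {U : Set (Fin k → ℝ)}
    {N : Set (Fin m → ℝ)} {t₀ : Fin m → ℝ} {ϑ : (Fin m → ℝ) → Fin k → ℝ}
    (hφ : ContDiffOn ℝ 2 φ (Ioi 0)) (hU : IsOpen U) (hS : ContDiffOn ℝ 2 S U)
    (hS₀ : ∀ θ ∈ U, ∀ i, 0 < S θ i) (hN : N ∈ 𝓝 t₀) (hNpos : ∀ t ∈ N, ∀ i, 0 < t i)
    (hϑ₀ : ϑ t₀ ∈ U) (hϑ : ContinuousAt ϑ t₀) (hstat : ∀ t ∈ N, gradDphiR φ S t (ϑ t) = 0)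
    (hH : (hessMatrix (fun θ => DphiR φ (S θ) t₀) (ϑ t₀)).PosDef) :
    ContDiffAt ℝ 1 ϑ t₀ ∧
      jacMatrix ϑ t₀ = (hessMatrix (fun θ => DphiR φ (S θ) t₀) (ϑ t₀))⁻¹ * (jacMatrix S (ϑ t₀))ᵀ *
        diagonal fun i => S (ϑ t₀) i / t₀ i ^ 2 * deriv (deriv φ) (S (ϑ t₀) i / t₀ i) := by
  have ht₀ := hNpos t₀ (mem_of_mem_nhds hN)
  have hφ' : DifferentiableOn ℝ (deriv φ) (Ioi 0) :=
    (hφ.deriv_of_isOpen (m := 1) isOpen_Ioi (by norm_num)).differentiableOn one_ne_zero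
  have hG : ContDiffAt ℝ 1 (fun p : (Fin m → ℝ) × (Fin k → ℝ) => gradDphiR φ S p.1 p.2)
      (t₀, ϑ t₀) :=
    (contDiffOn_gradDphiR hφ hU hS hS₀ hNpos).contDiffAt (prod_mem_nhds hN (hU.mem_nhds hϑ₀))
  -- `hessMatrix` is the transposed Jacobian of the gradient, and `H0` is symmetric
  have hGθ : jacMatrix (gradDphiR φ S t₀) (ϑ t₀) =
      hessMatrix (fun θ => DphiR φ (S θ) t₀) (ϑ t₀) := by
    rw [← hH.isHermitian.eq, conjTranspose_eq_transpose_of_trivial,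
      hessMatrix_DphiR_comp (hφ.differentiableOn (by norm_num)) hU
        (hS.differentiableOn (by norm_num)) hS₀ ht₀ hϑ₀, transpose_transpose]
  have hdet : IsUnit (jacMatrix (gradDphiR φ S t₀) (ϑ t₀)).det :=
    hGθ ▸ isUnit_iff_ne_zero.2 hH.det_pos.ne'
  have hGϑ : ∀ᶠ t in 𝓝 t₀, gradDphiR φ S t (ϑ t) = gradDphiR φ S t₀ (ϑ t₀) :=
    eventually_of_mem hN fun t ht => (hstat t ht).trans (hstat t₀ (mem_of_mem_nhds hN)).symm
  have hϑC1 := contDiffAt_of_implicit_of_isUnit_det hG one_ne_zero hdet hϑ hGϑ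
  refine ⟨hϑC1, ?_⟩
  rw [jacMatrix_eq_neg_inv_mul_of_implicit (hG.differentiableAt one_ne_zero)
      (hϑC1.differentiableAt one_ne_zero) hdet hGϑ, hGθ,
    jacMatrix_gradDphiR_fst (fun i => hφ'.differentiableAt (Ioi_mem_nhds
      (div_pos (hS₀ _ hϑ₀ i) (ht₀ i)))) fun i => (ht₀ i).ne']
  simp only [Matrix.mul_neg, neg_neg, Matrix.mul_assoc]

end PhiDivergence

theorem statement12_general (m k : ℕ)
    (φ : ℝ → ℝ)
    (hφconv : ConvexOn ℝ (Set.Ici 0) φ)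
    (hφ0 : ContinuousWithinAt φ (Set.Ici 0) 0)
    (hφC2 : ContDiffOn ℝ 2 φ (Set.Ioi (0 : ℝ)))
    (Θ : Set (Fin k → ℝ)) (hΘbd : Bornology.IsBounded Θ)
    (S : (Fin k → ℝ) → (Fin m → ℝ))
    (hScont : ContinuousOn S (closure Θ))
    (hSinj : Set.InjOn S (closure Θ))
    (hSC2 : ContDiffOn ℝ 2 S (interior Θ))
    (hSrange : ∀ θ ∈ closure Θ, ∀ i, S θ i ∈ Set.Icc (0 : ℝ) 1)
    (hSint : ∀ θ ∈ interior Θ, ∀ i, S θ i ∈ Set.Ioo (0 : ℝ) 1)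
    (t0 : Fin m → ℝ)
    (N : Set (Fin m → ℝ)) (hNopen : IsOpen N) (ht0N : t0 ∈ N)
    (hNsub : ∀ t ∈ N, ∀ i, t i ∈ Set.Ioo (0 : ℝ) 1)
    (ϑ : (Fin m → ℝ) → (Fin k → ℝ))
    (hϑ : ∀ t ∈ N, ϑ t ∈ interior Θ ∧
      ∀ s, IsPhiProjR φ (S '' closure Θ) t s ↔ s = S (ϑ t))
    (hH0 : (hessMatrix (fun θ => DphiR φ (S θ) t0) (ϑ t0)).PosDef) :
    ∃ U : Set (Fin m → ℝ), IsOpen U ∧ t0 ∈ U ∧ U ⊆ N ∧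
      ContDiffOn ℝ 1 (fun t => S (ϑ t)) U ∧
      jacMatrix (fun t => S (ϑ t)) t0 =
        jacMatrix S (ϑ t0) *
          ((hessMatrix (fun θ => DphiR φ (S θ) t0) (ϑ t0))⁻¹ *
            (jacMatrix S (ϑ t0))ᵀ *
            Matrix.diagonal
              (fun i => S (ϑ t0) i / (t0 i) ^ 2 *
                deriv (deriv φ) (S (ϑ t0) i / t0 i))) := by
  have hN : N ∈ 𝓝 t0 := hNopen.mem_nhds ht0N
  have htpos : ∀ t ∈ N, ∀ i, 0 < t i := fun t ht i => (hNsub t ht i).1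
  have hSpos : ∀ θ ∈ interior Θ, ∀ i, 0 < S θ i := fun θ hθ i => (hSint θ hθ i).1
  have hθ₀ : ϑ t0 ∈ interior Θ := (hϑ t0 ht0N).1
  have hcont : ContinuousAt ϑ t0 :=
    continuousAt_of_isPhiProjR hΘbd.isCompact_closure
      (hφconv.continuousOn_Ici_of_continuousWithinAt hφ0) hScont hSinj
      (fun θ hθ i => (hSrange θ hθ i).1) hN htpos
      fun t ht => ⟨interior_subset_closure (hϑ t ht).1, (hϑ t ht).2⟩
  have hstat : ∀ t ∈ N, gradDphiR φ S t (ϑ t) = 0 := fun t ht =>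
    gradDphiR_eq_zero_of_isMinOn (hφC2.differentiableOn (by norm_num)) isOpen_interior
      interior_subset_closure (hSC2.differentiableOn (by norm_num)) hSpos (htpos t ht) (hϑ t ht).1
      ((isPhiProjR_image_iff (interior_subset_closure (hϑ t ht).1)).1 (((hϑ t ht).2 _).2 rfl))
  obtain ⟨hϑC1, hJϑ⟩ := contDiffAt_and_jacMatrix_eq_of_gradDphiR_eq_zero hφC2 isOpen_interior
    hSC2 hSpos hN htpos hθ₀ hcont hstat hH0
  have hSC1 : ContDiffAt ℝ 1 S (ϑ t0) :=
    (hSC2.contDiffAt (isOpen_interior.mem_nhds hθ₀)).of_le one_le_two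
  obtain ⟨u, hu, huC1⟩ := (hSC1.comp t0 hϑC1).contDiffOn le_rfl (by simp)
  refine ⟨interior u ∩ N, isOpen_interior.inter hNopen, ⟨mem_interior_iff_mem_nhds.2 hu, ht0N⟩,
    inter_subset_right, huC1.mono (inter_subset_left.trans interior_subset), ?_⟩
  rw [show (fun t => S (ϑ t)) = S ∘ ϑ from rfl,
    jacMatrix_comp (hSC1.differentiableAt one_ne_zero) (hϑC1.differentiableAt one_ne_zero), hJϑ]

/-- under the assumptions of Statement 11, the projection map
`S* = S ∘ ϑ*` is continuously differentiable near `t0`, with Jacobian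
`J[S*](t0) = J[S](ϑ*(t0)) · J[ϑ*](t0)` where
`J[ϑ*](t0) = H0⁻¹ · J[S](ϑ*(t0))ᵀ · Δ(t0)`. -/
theorem statement12 (m k : ℕ) (hm : 1 ≤ m) (hk : 1 ≤ k) (hkm : k ≤ m)
    (φ : ℝ → ℝ)
    (hφconv : ConvexOn ℝ (Set.Ici 0) φ)
    (hφ0 : ContinuousWithinAt φ (Set.Ici 0) 0)
    (hφsc : StrictConvexOn ℝ (Set.Ici (0 : ℝ)) φ)
    (hφC2 : ContDiffOn ℝ 2 φ (Set.Ioi (0 : ℝ)))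
    (Θ : Set (Fin k → ℝ)) (hΘbd : Bornology.IsBounded Θ)
    (hΘint : (interior Θ).Nonempty)
    (S : (Fin k → ℝ) → (Fin m → ℝ))
    (hScont : ContinuousOn S (closure Θ))
    (hSinj : Set.InjOn S (closure Θ))
    (hSC2 : ContDiffOn ℝ 2 S (interior Θ))
    (hSrange : ∀ θ ∈ closure Θ, ∀ i, S θ i ∈ Set.Icc (0 : ℝ) 1)
    (hSint : ∀ θ ∈ interior Θ, ∀ i, S θ i ∈ Set.Ioo (0 : ℝ) 1)
    (t0 : Fin m → ℝ) (ht0 : ∀ i, t0 i ∈ Set.Ioo (0 : ℝ) 1)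
    (N : Set (Fin m → ℝ)) (hNopen : IsOpen N) (ht0N : t0 ∈ N)
    (hNsub : ∀ t ∈ N, ∀ i, t i ∈ Set.Ioo (0 : ℝ) 1)
    (ϑ : (Fin m → ℝ) → (Fin k → ℝ))
    (hϑ : ∀ t ∈ N, ϑ t ∈ interior Θ ∧
      ∀ s, IsPhiProjR φ (S '' closure Θ) t s ↔ s = S (ϑ t))
    (hH0 : (hessMatrix (fun θ => DphiR φ (S θ) t0) (ϑ t0)).PosDef) :
    ∃ U : Set (Fin m → ℝ), IsOpen U ∧ t0 ∈ U ∧ U ⊆ N ∧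
      ContDiffOn ℝ 1 (fun t => S (ϑ t)) U ∧
      jacMatrix (fun t => S (ϑ t)) t0 =
        jacMatrix S (ϑ t0) *
          ((hessMatrix (fun θ => DphiR φ (S θ) t0) (ϑ t0))⁻¹ *
            (jacMatrix S (ϑ t0))ᵀ *
            Matrix.diagonal
              (fun i => S (ϑ t0) i / (t0 i) ^ 2 *
                deriv (deriv φ) (S (ϑ t0) i / t0 i))) :=
  statement12_general m k φ hφconv hφ0 hφC2 Θ hΘbd S hScont hSinj hSC2 hSrange hSint t0 N hNopen
    ht0N hNsub ϑ hϑ hH0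
end

section
/- Assume: cl(Θ) is convex and S is affine, S(θ) = Aθ + γ for an m×k real matrix A and γ ∈ ℝ^m; φ' satisfies lim_{x→0⁺} φ'(x) = −∞; Θ is defined by finitely many linear inequalities, i.e., Θ = {θ ∈ ℝ^k : Bθ ≤ b} for some d×k real matrix B and b ∈ ℝ^d; and M = S(cl(Θ)) is a convex set consisting of probability vectors (every p ∈ M satisfies p ∈ [0,1]^m and Σ_{i=1}^m p_i = 1). Then for every probability vector q ∈ (0,1)^m, the (unique) φ-projection p* of q on M satisfies p* ∈ (0,1)^m. -/
/-!
`s ↦ D_φ(s∣q)` is continuous and strictly convex on the nonnegative orthant, so it has exactly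
one minimizer `p` on the compact convex set `M`. If `p j = 0`, move from `p` towards a point
`p₀ ∈ M` with positive coordinates: by convexity of `φ` every coordinate `i ≠ j` raises the
divergence by `O(t)`, while the `j`-th one changes it by `q_j (φ(t c) - φ 0)` with `c > 0`, and the
slope `(φ(t c) - φ 0) / (t c) ≤ φ'(t c)` tends to `-∞`. Finally `p i < 1` because `Σ p = 1` and,
`q` being a probability vector with coordinates `< 1`, there is a coordinate besides `i`.
-/

open Filter Topology

open Set

namespace ConvexOn

variable {f : ℝ → ℝ} {a : ℝ}

theorem continuousOn_Ici_of_continuousWithinAt_s18 (hf : ConvexOn ℝ (Ici a) f)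
    (ha : ContinuousWithinAt f (Ici a) a) : ContinuousOn f (Ici a) := by
  intro x hx
  rcases (mem_Ici.mp hx).eq_or_lt with rfl | hax
  · exact ha
  · have hint : x ∈ interior (Ici a) := by rwa [interior_Ici]
    exact ((hf.continuousOn_interior x hint).continuousAt
      (isOpen_interior.mem_nhds hint)).continuousWithinAt

theorem tendsto_slope_atBot (hf : ConvexOn ℝ (Ici a) f)
    (hderiv : Tendsto (deriv f) (𝓝[>] a) atBot) : Tendsto (slope f a) (𝓝[>] a) atBot := by
  refine tendsto_atBot_mono' _ ?_ hderiv
  filter_upwards [hderiv.eventually (eventually_lt_atBot 0), self_mem_nhdsWithin]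
    with t hneg (hat : a < t)
  exact hf.slope_le_deriv self_mem_Ici hat.le hat (differentiableAt_of_deriv_ne_zero hneg.ne)

end ConvexOn

theorem StrictConvexOn.mul_comp_div {φ : ℝ → ℝ} (hφ : StrictConvexOn ℝ (Ici 0) φ) {c : ℝ}
    (hc : 0 < c) :
    StrictConvexOn ℝ (Ici 0) (fun x => c * φ (x / c)) := by
  refine ⟨convex_Ici 0, fun x hx y hy hxy a b ha hb hab => ?_⟩
  have hx' : x / c ∈ Ici 0 := div_nonneg hx hc.le
  have hy' : y / c ∈ Ici 0 := div_nonneg hy hc.le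
  have hlt := hφ.2 hx' hy' (by rwa [Ne, div_left_inj' hc.ne']) ha hb hab
  simp only [smul_eq_mul] at hlt ⊢
  rw [show (a * x + b * y) / c = a * (x / c) + b * (y / c) by ring]
  nlinarith

section Divergence

variable {m : ℕ} {φ : ℝ → ℝ} {q : Fin m → ℝ}

theorem continuousOn_DphiR (hφ : ContinuousOn φ (Ici 0)) (hq : ∀ i, 0 < q i) :
    ContinuousOn (fun s => DphiR φ s q) (Ici 0) := by
  refine continuousOn_finsetSum _ fun i _ => continuousOn_const.mul <|
    hφ.comp ((continuous_apply i).div_const _).continuousOn fun s hs => ?_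
  exact div_nonneg (hs i) (hq i).le

theorem strictConvexOn_DphiR (hφ : StrictConvexOn ℝ (Ici 0) φ) (hq : ∀ i, 0 < q i) :
    StrictConvexOn ℝ (Ici 0) (fun s => DphiR φ s q) := by
  refine ⟨convex_Ici 0, fun x hx y hy hxy a b ha hb hab => ?_⟩
  obtain ⟨j, hj⟩ := Function.ne_iff.mp hxy
  have hterm := fun i => hφ.mul_comp_div (hq i)
  simp only [DphiR, smul_eq_mul, Finset.mul_sum, ← Finset.sum_add_distrib, Pi.add_apply]
  refine Finset.sum_lt_sum (fun i _ => ?_) ⟨j, Finset.mem_univ j, ?_⟩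
  · exact (hterm i).convexOn.2 (hx i) (hy i) ha.le hb.le hab
  · exact (hterm j).2 (hx j) (hy j) hj ha hb hab

theorem DphiR_segment_le (hφ : ConvexOn ℝ (Ici 0) φ) (hq : ∀ i, 0 < q i)
    {p p₀ : Fin m → ℝ} (hp : 0 ≤ p) (hp₀ : 0 ≤ p₀) {j : Fin m} (hpj : p j = 0)
    {t : ℝ} (ht₀ : 0 ≤ t) (ht₁ : t ≤ 1) :
    DphiR φ ((1 - t) • p + t • p₀) q ≤ DphiR φ p q
      + t * ∑ i ∈ Finset.univ.erase j, q i * (φ (p₀ i / q i) - φ (p i / q i))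
      + q j * (φ (t * (p₀ j / q j)) - φ 0) := by
  have hterm : ∀ i, q i * φ (((1 - t) • p + t • p₀) i / q i) - q i * φ (p i / q i)
      ≤ t * (q i * (φ (p₀ i / q i) - φ (p i / q i))) := by
    intro i
    have h := hφ.2 (div_nonneg (hp i) (hq i).le) (div_nonneg (hp₀ i) (hq i).le)
      (sub_nonneg.2 ht₁) ht₀ (sub_add_cancel 1 t)
    simp only [smul_eq_mul, Pi.add_apply, Pi.smul_apply] at h ⊢
    rw [show ((1 - t) * p i + t * p₀ i) / q i = (1 - t) * (p i / q i) + t * (p₀ i / q i) by ring]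
    nlinarith [hq i]
  have hj : q j * φ (((1 - t) • p + t • p₀) j / q j) - q j * φ (p j / q j)
      = q j * (φ (t * (p₀ j / q j)) - φ 0) := by
    simp only [smul_eq_mul, Pi.add_apply, Pi.smul_apply, hpj]
    ring_nf
  have hsum := Finset.sum_le_sum fun i (_ : i ∈ Finset.univ.erase j) => hterm i
  rw [← Finset.mul_sum, Finset.sum_sub_distrib] at hsum
  simp only [DphiR, ← Finset.add_sum_erase _ _ (Finset.mem_univ j)]
  linarith

theorem eventually_DphiR_segment_lt (hφ : ConvexOn ℝ (Ici 0) φ)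
    (hderiv : Tendsto (deriv φ) (𝓝[>] 0) atBot) (hq : ∀ i, 0 < q i)
    {p p₀ : Fin m → ℝ} (hp : 0 ≤ p) (hp₀ : 0 ≤ p₀) {j : Fin m} (hpj : p j = 0)
    (hp₀j : 0 < p₀ j) :
    ∀ᶠ t in 𝓝[>] (0 : ℝ), DphiR φ ((1 - t) • p + t • p₀) q < DphiR φ p q := by
  set K := ∑ i ∈ Finset.univ.erase j, q i * (φ (p₀ i / q i) - φ (p i / q i))
  set c := p₀ j / q j
  have hc : 0 < c := div_pos hp₀j (hq j)
  have hscale : Tendsto (fun t => t * c) (𝓝[>] 0) (𝓝[>] 0) := by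
    have h := ((continuous_mul_const c).continuousWithinAt (s := Ioi 0) (x := 0))
      |>.tendsto_nhdsWithin (t := Ioi 0) fun t (ht : 0 < t) => mul_pos ht hc
    rwa [zero_mul] at h
  have hslope := (hφ.tendsto_slope_atBot hderiv).comp hscale
  filter_upwards [hslope.eventually (eventually_lt_atBot (-K / (q j * c))),
    Ioc_mem_nhdsGT zero_lt_one] with t hlt ⟨ht₀, ht₁⟩
  have hK : q j * (φ (t * c) - φ 0) < -(t * K) := by
    have hqc : 0 < q j * c := mul_pos (hq j) hc
    rw [Function.comp_apply, slope_def_field, sub_zero, lt_div_iff₀ hqc] at hlt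
    calc q j * (φ (t * c) - φ 0) = t * ((φ (t * c) - φ 0) / (t * c) * (q j * c)) := by
          field_simp
      _ < t * -K := mul_lt_mul_of_pos_left hlt ht₀
      _ = -(t * K) := by ring
  linarith [DphiR_segment_le hφ hq hp hp₀ hpj ht₀.le ht₁]

theorem IsMinOn.pos_of_DphiR (hφ : ConvexOn ℝ (Ici 0) φ)
    (hderiv : Tendsto (deriv φ) (𝓝[>] 0) atBot) (hq : ∀ i, 0 < q i)
    {M : Set (Fin m → ℝ)} (hM : Convex ℝ M) (hM₀ : M ⊆ Ici 0)
    {p₀ : Fin m → ℝ} (hp₀M : p₀ ∈ M) (hp₀ : ∀ i, 0 < p₀ i)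
    {p : Fin m → ℝ} (hpM : p ∈ M) (hmin : IsMinOn (fun s => DphiR φ s q) M p) (j : Fin m) :
    0 < p j := by
  by_contra hnot
  have hpj : p j = 0 := le_antisymm (not_lt.1 hnot) (hM₀ hpM j)
  obtain ⟨t, hlt, ht₀, ht₁⟩ := ((eventually_DphiR_segment_lt hφ hderiv hq (hM₀ hpM) (hM₀ hp₀M)
    hpj (hp₀ j)).and (Ioc_mem_nhdsGT zero_lt_one)).exists
  have hsM : (1 - t) • p + t • p₀ ∈ M := hM hpM hp₀M (by linarith) ht₀.le (by ring)
  exact (isMinOn_iff.1 hmin _ hsM).not_gt hlt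

end Divergence

theorem apply_lt_one_of_sum_eq_one {ι : Type*} [Fintype ι] {p q : ι → ℝ}
    (hq : ∀ i, q i < 1) (hq₁ : ∑ i, q i = 1) (hp : ∀ i, 0 < p i) (hp₁ : ∑ i, p i = 1) (i : ι) :
    p i < 1 := by
  classical
  have hne : (Finset.univ.erase i).Nonempty := by
    refine Finset.nonempty_of_sum_ne_zero (f := q) ?_
    rw [Finset.sum_erase_eq_sub (Finset.mem_univ i), hq₁]
    linarith [hq i]
  have hrest := Finset.sum_pos (fun j _ => hp j) hne
  rw [Finset.sum_erase_eq_sub (Finset.mem_univ i), hp₁] at hrest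
  linarith

theorem statement18_general (m k : ℕ)
    (φ : ℝ → ℝ)
    (hφ0 : ContinuousWithinAt φ (Set.Ici 0) 0)
    (hφsc : StrictConvexOn ℝ (Set.Ici (0 : ℝ)) φ)
    (Θ : Set (Fin k → ℝ)) (hΘbd : Bornology.IsBounded Θ)
    (hΘint : (interior Θ).Nonempty)
    (S : (Fin k → ℝ) → (Fin m → ℝ))
    (hScont : ContinuousOn S (closure Θ))
    (hSint : ∀ θ ∈ interior Θ, ∀ i, S θ i ∈ Set.Ioo (0 : ℝ) 1)
    (hderiv : Filter.Tendsto (deriv φ) (𝓝[>] (0 : ℝ)) Filter.atBot)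
    (hMconv : Convex ℝ (S '' closure Θ))
    (hMprob : ∀ p ∈ S '' closure Θ, (∀ i, p i ∈ Set.Icc (0 : ℝ) 1) ∧ ∑ i, p i = 1)
    (q : Fin m → ℝ) (hq : ∀ i, q i ∈ Set.Ioo (0 : ℝ) 1) (hq1 : ∑ i, q i = 1) :
    ∃ p : Fin m → ℝ,
      (∀ s, IsPhiProjR φ (S '' closure Θ) q s ↔ s = p) ∧
      ∀ i, p i ∈ Set.Ioo (0 : ℝ) 1 := by
  have hqpos : ∀ i, 0 < q i := fun i => (hq i).1
  have hφ : ConvexOn ℝ (Ici 0) φ := hφsc.convexOn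
  have hM₀ : S '' closure Θ ⊆ Ici 0 := fun p hp i => ((hMprob p hp).1 i).1
  obtain ⟨θ₀, hθ₀⟩ := hΘint
  have hp₀M : S θ₀ ∈ S '' closure Θ := mem_image_of_mem S (subset_closure (interior_subset hθ₀))
  obtain ⟨p, hpM, hmin⟩ := (hΘbd.isCompact_closure.image_of_continuousOn hScont).exists_isMinOn
    ⟨_, hp₀M⟩ ((continuousOn_DphiR (hφ.continuousOn_Ici_of_continuousWithinAt_s18 hφ0) hqpos).mono hM₀)
  have hppos := hmin.pos_of_DphiR hφ hderiv hqpos hMconv hM₀ hp₀M (fun i => (hSint θ₀ hθ₀ i).1) hpM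
  have hstrict := (strictConvexOn_DphiR hφsc hqpos).subset hM₀ hMconv
  refine ⟨p, fun s => ⟨fun ⟨hsM, hsmin⟩ => hstrict.eq_of_isMinOn hsmin hmin hsM hpM, ?_⟩,
    fun i => ⟨hppos i, ?_⟩⟩
  · rintro rfl
    exact ⟨hpM, hmin⟩
  · exact apply_lt_one_of_sum_eq_one (fun i => (hq i).2) hq1 hppos (hMprob p hpM).2 i

/-- if `cl Θ` is convex, `S` is affine (`S(θ) = Aθ + γ`),
`lim_{x→0⁺} φ'(x) = −∞`, `Θ` is defined by finitely many linear inequalities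
(`Θ = {θ : Bθ ≤ b}`), and `M = S(cl Θ)` is a convex set of probability vectors,
then for every probability vector `q ∈ (0,1)^m` the (unique) `φ`-projection `p*`
of `q` on `M` satisfies `p* ∈ (0,1)^m`. -/
theorem statement18 (m k : ℕ) (hm : 1 ≤ m) (hk : 1 ≤ k) (hkm : k ≤ m)
    (φ : ℝ → ℝ)
    (hφconv : ConvexOn ℝ (Set.Ici 0) φ)
    (hφ0 : ContinuousWithinAt φ (Set.Ici 0) 0)
    (hφsc : StrictConvexOn ℝ (Set.Ici (0 : ℝ)) φ)
    (hφC2 : ContDiffOn ℝ 2 φ (Set.Ioi (0 : ℝ)))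
    (Θ : Set (Fin k → ℝ)) (hΘbd : Bornology.IsBounded Θ)
    (hΘint : (interior Θ).Nonempty)
    (S : (Fin k → ℝ) → (Fin m → ℝ))
    (hScont : ContinuousOn S (closure Θ))
    (hSinj : Set.InjOn S (closure Θ))
    (hSint : ∀ θ ∈ interior Θ, ∀ i, S θ i ∈ Set.Ioo (0 : ℝ) 1)
    (hSrange : ∀ θ ∈ closure Θ, ∀ i, S θ i ∈ Set.Icc (0 : ℝ) 1)
    (hΘconv : Convex ℝ (closure Θ))
    (A : Matrix (Fin m) (Fin k) ℝ) (γ : Fin m → ℝ)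
    (hSaff : ∀ θ ∈ closure Θ, S θ = A.mulVec θ + γ)
    (hderiv : Filter.Tendsto (deriv φ) (𝓝[>] (0 : ℝ)) Filter.atBot)
    (d : ℕ) (B : Matrix (Fin d) (Fin k) ℝ) (b : Fin d → ℝ)
    (hΘdef : Θ = {θ : Fin k → ℝ | ∀ j, B.mulVec θ j ≤ b j})
    (hMconv : Convex ℝ (S '' closure Θ))
    (hMprob : ∀ p ∈ S '' closure Θ, (∀ i, p i ∈ Set.Icc (0 : ℝ) 1) ∧ ∑ i, p i = 1)
    (q : Fin m → ℝ) (hq : ∀ i, q i ∈ Set.Ioo (0 : ℝ) 1) (hq1 : ∑ i, q i = 1) :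
    ∃ p : Fin m → ℝ,
      (∀ s, IsPhiProjR φ (S '' closure Θ) q s ↔ s = p) ∧
      ∀ i, p i ∈ Set.Ioo (0 : ℝ) 1 :=
  statement18_general m k φ hφ0 hφsc Θ hΘbd hΘint S hScont hSint hderiv hMconv hMprob q hq hq1
end
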